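/- arXiv:2402.03133 — 3 statements merged into one kernel-verified Lean document; each statement's English description precedes it below -/
import Mathlib

section
/- Suppose u : [0,1] × [0,∞) → ℝ is a smooth solution of u_t + u_{xxx} = 0 satisfying u(0,t) = u(1,t) = 0 and u_x(1,t) = β u_x(0,t) for all t ≥ 0. Then for every t ≥ 0, ∫₀¹ u(x,t)² dx = ∫₀¹ u(x,0)² dx − (1 − β²) ∫₀^t u_x(0,s)² ds. -/
open MeasureTheory intervalIntegral

noncomputable def px (f : ℝ × ℝ → ℝ) : ℝ × ℝ → ℝ := fun p => fderiv ℝ f p (1, 0)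
noncomputable def pt (f : ℝ × ℝ → ℝ) : ℝ × ℝ → ℝ := fun p => fderiv ℝ f p (0, 1)

lemma px_smooth {f : ℝ × ℝ → ℝ} (hf : ContDiff ℝ (⊤ : ℕ∞) f) : ContDiff ℝ (⊤ : ℕ∞) (px f) :=
  (hf.fderiv_right (by simp)).clm_apply contDiff_const

lemma pt_smooth {f : ℝ × ℝ → ℝ} (hf : ContDiff ℝ (⊤ : ℕ∞) f) : ContDiff ℝ (⊤ : ℕ∞) (pt f) :=
  (hf.fderiv_right (by simp)).clm_apply contDiff_const

lemma hasDerivAt_px {f : ℝ × ℝ → ℝ} (hf : ContDiff ℝ (⊤ : ℕ∞) f) (x t : ℝ) :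
    HasDerivAt (fun y => f (y, t)) (px f (x, t)) x := by
  have h1 : HasDerivAt (fun y : ℝ => (y, t)) ((1 : ℝ), (0 : ℝ)) x :=
    (hasDerivAt_id x).prodMk (hasDerivAt_const x t)
  exact (hf.differentiable (by simp) (x, t)).hasFDerivAt.comp_hasDerivAt x h1

lemma hasDerivAt_pt {f : ℝ × ℝ → ℝ} (hf : ContDiff ℝ (⊤ : ℕ∞) f) (x t : ℝ) :
    HasDerivAt (fun s => f (x, s)) (pt f (x, t)) t := by
  have h1 : HasDerivAt (fun s : ℝ => (x, s)) ((0 : ℝ), (1 : ℝ)) t :=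
    (hasDerivAt_const t x).prodMk (hasDerivAt_id t)
  exact (hf.differentiable (by simp) (x, t)).hasFDerivAt.comp_hasDerivAt t h1

theorem stmt_4 (β : ℝ) (u : ℝ → ℝ → ℝ)
    (hsmooth : ContDiff ℝ (⊤ : ℕ∞) (fun p : ℝ × ℝ => u p.1 p.2))
    (hpde : ∀ x t : ℝ, deriv (fun s => u x s) t
        + iteratedDeriv 3 (fun y => u y t) x = 0)
    (hbc0 : ∀ t : ℝ, 0 ≤ t → u 0 t = 0)
    (hbc1 : ∀ t : ℝ, 0 ≤ t → u 1 t = 0)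
    (hbc2 : ∀ t : ℝ, 0 ≤ t →
      deriv (fun y => u y t) 1 = β * deriv (fun y => u y t) 0) :
    ∀ t : ℝ, 0 ≤ t →
      (∫ x in (0:ℝ)..1, (u x t) ^ 2)
        = (∫ x in (0:ℝ)..1, (u x 0) ^ 2)
          - (1 - β ^ 2) * ∫ s in (0:ℝ)..t, (deriv (fun y => u y s) 0) ^ 2 := by
  set F : ℝ × ℝ → ℝ := fun p => u p.1 p.2 with hFdef
  have hF : ContDiff ℝ (⊤ : ℕ∞) F := hsmooth
  set U1 := px F with hU1def
  set U2 := px U1 with hU2def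
  set U3 := px U2 with hU3def
  set V := pt F with hVdef
  have hU1s : ContDiff ℝ (⊤ : ℕ∞) U1 := px_smooth hF
  have hU2s : ContDiff ℝ (⊤ : ℕ∞) U2 := px_smooth hU1s
  have hU3s : ContDiff ℝ (⊤ : ℕ∞) U3 := px_smooth hU2s
  have hVs : ContDiff ℝ (⊤ : ℕ∞) V := pt_smooth hF
  -- derivative identifications
  have h1 : ∀ x t : ℝ, deriv (fun y => u y t) x = U1 (x, t) := fun x t =>
    (hasDerivAt_px hF x t).deriv
  have h1f : ∀ t : ℝ, (deriv (fun y => u y t)) = fun x => U1 (x, t) := fun t =>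
    funext fun x => h1 x t
  have h2 : ∀ x t : ℝ, deriv (deriv (fun y => u y t)) x = U2 (x, t) := by
    intro x t
    rw [h1f t]
    exact (hasDerivAt_px hU1s x t).deriv
  have h2f : ∀ t : ℝ, (deriv (deriv (fun y => u y t))) = fun x => U2 (x, t) := fun t =>
    funext fun x => h2 x t
  have h3 : ∀ x t : ℝ, iteratedDeriv 3 (fun y => u y t) x = U3 (x, t) := by
    intro x t
    have : iteratedDeriv 3 (fun y => u y t) = deriv (deriv (deriv (fun y => u y t))) := by
      simp [iteratedDeriv_succ, iteratedDeriv_zero]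
    rw [this, h1f t]
    have : deriv (fun x => U1 (x, t)) = fun x => U2 (x, t) := funext fun x =>
      (hasDerivAt_px hU1s x t).deriv
    rw [this]
    exact (hasDerivAt_px hU2s x t).deriv
  have hV : ∀ x t : ℝ, deriv (fun s => u x s) t = V (x, t) := fun x t =>
    (hasDerivAt_pt hF x t).deriv
  have hP : ∀ x t : ℝ, V (x, t) = -U3 (x, t) := by
    intro x t
    have := hpde x t
    rw [hV x t, h3 x t] at this
    linarith
  -- Part A : space integral identity
  have partA : ∀ t : ℝ, 0 ≤ t →
      (∫ x in (0:ℝ)..1, 2 * F (x, t) * U3 (x, t))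
        = (1 - β ^ 2) * (U1 (0, t)) ^ 2 := by
    intro t ht
    have hG : ∀ x : ℝ, HasDerivAt
        (fun y => 2 * F (y, t) * U2 (y, t) - (U1 (y, t)) ^ 2)
        (2 * F (x, t) * U3 (x, t)) x := by
      intro x
      have hF' := hasDerivAt_px hF x t
      have hU1' := hasDerivAt_px hU1s x t
      have hU2' := hasDerivAt_px hU2s x t
      have : HasDerivAt (fun y => 2 * F (y, t) * U2 (y, t) - (U1 (y, t)) ^ 2) _ x :=
        ((hF'.const_mul 2).mul hU2').sub (hU1'.pow 2)
      convert this using 1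
      push_cast
      ring
    have hcont : Continuous (fun x : ℝ => 2 * F (x, t) * U3 (x, t)) := by
      have c1 : Continuous (fun x : ℝ => (x, t)) := continuous_id.prodMk continuous_const
      exact ((continuous_const.mul ((hF.continuous).comp c1)).mul ((hU3s.continuous).comp c1))
    have := intervalIntegral.integral_eq_sub_of_hasDerivAt
      (f := fun y => 2 * F (y, t) * U2 (y, t) - (U1 (y, t)) ^ 2)
      (fun x _ => hG x) (hcont.intervalIntegrable 0 1)
    rw [this]
    have e0 : F (0, t) = 0 := hbc0 t ht
    have e1 : F (1, t) = 0 := hbc1 t ht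
    have e2 : U1 (1, t) = β * U1 (0, t) := by
      have := hbc2 t ht
      rwa [h1 1 t, h1 0 t] at this
    simp only [e0, e1, e2]
    ring
  -- Part B : derivative of energy
  have partB : ∀ t₀ : ℝ, HasDerivAt (fun t => ∫ x in (0:ℝ)..1, (u x t) ^ 2)
      (∫ x in (0:ℝ)..1, 2 * F (x, t₀) * V (x, t₀)) t₀ := by
    intro t₀
    have hcontV : Continuous (fun p : ℝ × ℝ => 2 * F p * V p) :=
      (continuous_const.mul hF.continuous).mul hVs.continuous
    -- bound on compact set
    obtain ⟨C, hC⟩ : ∃ C : ℝ, ∀ p ∈ (Set.uIcc (0:ℝ) 1) ×ˢ Set.Icc (t₀ - 1) (t₀ + 1),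
        ‖2 * F p * V p‖ ≤ C := by
      have hK : IsCompact ((Set.uIcc (0:ℝ) 1) ×ˢ Set.Icc (t₀ - 1) (t₀ + 1)) :=
        isCompact_uIcc.prod isCompact_Icc
      rcases hK.exists_bound_of_continuousOn hcontV.continuousOn with ⟨C, hC⟩
      exact ⟨C, hC⟩
    have key := intervalIntegral.hasDerivAt_integral_of_dominated_loc_of_deriv_le
      (F := fun t x => (u x t) ^ 2) (F' := fun t x => 2 * F (x, t) * V (x, t))
      (x₀ := t₀) (a := (0:ℝ)) (b := 1) (μ := volume) (bound := fun _ => C)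
      (s := Metric.ball t₀ 1) (Metric.ball_mem_nhds t₀ one_pos)
      (Filter.Eventually.of_forall fun t => by
        have : Continuous (fun x : ℝ => (u x t) ^ 2) := by
          have c1 : Continuous (fun x : ℝ => (x, t)) := continuous_id.prodMk continuous_const
          exact ((hF.continuous).comp c1).pow 2
        exact this.aestronglyMeasurable)
      (by
        have : Continuous (fun x : ℝ => (u x t₀) ^ 2) := by
          have c1 : Continuous (fun x : ℝ => (x, t₀)) := continuous_id.prodMk continuous_const
          exact ((hF.continuous).comp c1).pow 2
        exact this.intervalIntegrable 0 1)
      (by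
        have : Continuous (fun x : ℝ => 2 * F (x, t₀) * V (x, t₀)) := by
          have c1 : Continuous (fun x : ℝ => (x, t₀)) := continuous_id.prodMk continuous_const
          exact hcontV.comp c1
        exact this.aestronglyMeasurable)
      (Filter.Eventually.of_forall fun x hx => by
        intro t htb
        apply hC (x, t)
        constructor
        · exact Set.uIoc_subset_uIcc hx
        · have : |t - t₀| < 1 := by simpa [Metric.mem_ball, Real.dist_eq] using htb
          constructor <;> [linarith [abs_lt.1 this |>.1]; linarith [abs_lt.1 this |>.2]])
      (intervalIntegrable_const)
      (Filter.Eventually.of_forall fun x hx => by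
        intro t htb
        have h := hasDerivAt_pt hF x t
        have : HasDerivAt (fun s => (u x s) ^ 2) _ t := h.pow 2
        refine this.congr_deriv ?_
        push_cast
        ring)
    exact key.2
  -- combine B with PDE and A
  have hEderiv : ∀ t₀ : ℝ, 0 ≤ t₀ → HasDerivAt (fun t => ∫ x in (0:ℝ)..1, (u x t) ^ 2)
      (-(1 - β ^ 2) * (U1 (0, t₀)) ^ 2) t₀ := by
    intro t₀ ht₀
    have hB := partB t₀
    have heq : (∫ x in (0:ℝ)..1, 2 * F (x, t₀) * V (x, t₀))
        = -(1 - β ^ 2) * (U1 (0, t₀)) ^ 2 := by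
      have : (fun x : ℝ => 2 * F (x, t₀) * V (x, t₀))
          = fun x => -(2 * F (x, t₀) * U3 (x, t₀)) := by
        funext x; rw [hP x t₀]; ring
      rw [this, intervalIntegral.integral_neg, partA t₀ ht₀]
      ring
    rwa [heq] at hB
  -- Part C : FTC in time
  intro t ht
  have hg : Continuous (fun s : ℝ => -(1 - β ^ 2) * (U1 (0, s)) ^ 2) := by
    have c1 : Continuous (fun s : ℝ => ((0:ℝ), s)) := continuous_const.prodMk continuous_id
    exact continuous_const.mul (((hU1s.continuous).comp c1).pow 2)
  have hftc := intervalIntegral.integral_eq_sub_of_hasDerivAt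
    (f := fun t => ∫ x in (0:ℝ)..1, (u x t) ^ 2)
    (f' := fun s => -(1 - β ^ 2) * (U1 (0, s)) ^ 2)
    (a := 0) (b := t)
    (fun s hs => by
      apply hEderiv
      rcases Set.mem_uIcc.1 hs with h | h
      · exact h.1
      · linarith [h.1, h.2])
    (hg.intervalIntegrable 0 t)
  have hrw : (∫ s in (0:ℝ)..t, -(1 - β ^ 2) * (U1 (0, s)) ^ 2)
      = -(1 - β ^ 2) * ∫ s in (0:ℝ)..t, (deriv (fun y => u y s) 0) ^ 2 := by
    rw [← intervalIntegral.integral_const_mul]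
    congr 1
    funext s
    rw [h1 0 s]
  rw [hrw] at hftc
  linarith
end

section
/- Suppose u : [0,1] × [0,∞) → ℝ is a smooth solution of u_t + u_{xxx} = 0 with u(0,t) = u(1,t) = 0 and u_x(1,t) = β u_x(0,t), where 0 ≤ β < 1. Then for all t ≥ 0, ∫₀¹ u(x,t)² dx ≤ ∫₀¹ u(x,0)² dx, and (1−β²) ∫₀^t u_x(0,s)² ds ≤ ∫₀¹ u(x,0)² dx. -/
open MeasureTheory intervalIntegral

theorem stmt_5 (β : ℝ) (hβ0 : 0 ≤ β) (hβ1 : β < 1) (u : ℝ → ℝ → ℝ)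
    (hsmooth : ContDiff ℝ (⊤ : ℕ∞) (fun p : ℝ × ℝ => u p.1 p.2))
    (hpde : ∀ x t : ℝ, deriv (fun s => u x s) t
        + iteratedDeriv 3 (fun y => u y t) x = 0)
    (hbc0 : ∀ t : ℝ, 0 ≤ t → u 0 t = 0)
    (hbc1 : ∀ t : ℝ, 0 ≤ t → u 1 t = 0)
    (hbc2 : ∀ t : ℝ, 0 ≤ t →
      deriv (fun y => u y t) 1 = β * deriv (fun y => u y t) 0) :
    ∀ t : ℝ, 0 ≤ t →
      (∫ x in (0:ℝ)..1, (u x t) ^ 2) ≤ (∫ x in (0:ℝ)..1, (u x 0) ^ 2)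
      ∧ (1 - β ^ 2) * (∫ s in (0:ℝ)..t, (deriv (fun y => u y s) 0) ^ 2)
          ≤ ∫ x in (0:ℝ)..1, (u x 0) ^ 2 := by
  set F : ℝ × ℝ → ℝ := fun p => u p.1 p.2 with hF
  have hFd : Differentiable ℝ F := hsmooth.differentiable (by simp)
  have hFc : Continuous F := hsmooth.continuous
  -- partial derivatives
  set vx : ℝ → ℝ → ℝ := fun x t => fderiv ℝ F (x, t) (1, 0) with hvx
  set vt : ℝ → ℝ → ℝ := fun x t => fderiv ℝ F (x, t) (0, 1) with hvt
  have hux : ∀ x t : ℝ, HasDerivAt (fun y => u y t) (vx x t) x := by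
    intro x t
    have hline : HasDerivAt (fun y : ℝ => (y, t)) ((1 : ℝ), (0 : ℝ)) x :=
      (hasDerivAt_id x).prodMk (hasDerivAt_const x t)
    exact (hFd (x, t)).hasFDerivAt.comp_hasDerivAt x hline
  have hut : ∀ x t : ℝ, HasDerivAt (fun s => u x s) (vt x t) t := by
    intro x t
    have hline : HasDerivAt (fun s : ℝ => (x, s)) ((0 : ℝ), (1 : ℝ)) t :=
      (hasDerivAt_const t x).prodMk (hasDerivAt_id t)
    exact (hFd (x, t)).hasFDerivAt.comp_hasDerivAt t hline
  have hfderivc : Continuous (fun p : ℝ × ℝ => fderiv ℝ F p) :=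
    hsmooth.continuous_fderiv (by simp)
  have hvxc : Continuous (fun p : ℝ × ℝ => vx p.1 p.2) := by
    exact (hfderivc.comp continuous_id).clm_apply continuous_const
  have hvtc : Continuous (fun p : ℝ × ℝ => vt p.1 p.2) := by
    exact (hfderivc.comp continuous_id).clm_apply continuous_const
  have hderiv_x : ∀ x t : ℝ, deriv (fun y => u y t) x = vx x t :=
    fun x t => (hux x t).deriv
  -- PDE in terms of vt
  have hpde' : ∀ x t : ℝ, vt x t = -iteratedDeriv 3 (fun y => u y t) x := by
    intro x t
    have := hpde x t
    have h2 : deriv (fun s => u x s) t = vt x t := (hut x t).deriv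
    linarith [this, h2.symm.le]
  -- energy and flux
  set E : ℝ → ℝ := fun t => ∫ x in (0:ℝ)..1, (u x t) ^ 2 with hE
  set G : ℝ → ℝ := fun t => ∫ s in (0:ℝ)..t, (vx 0 s) ^ 2 with hG
  -- derivative of E
  have hE' : ∀ t₀ : ℝ, HasDerivAt E (∫ x in (0:ℝ)..1, 2 * u x t₀ * vt x t₀) t₀ := by
    intro t₀
    -- bound on compact set
    obtain ⟨C, hC⟩ : ∃ C, ∀ p ∈ (Set.Icc (0:ℝ) 1 ×ˢ Set.Icc (t₀ - 1) (t₀ + 1)),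
        ‖2 * u p.1 p.2 * vt p.1 p.2‖ ≤ C := by
      apply (isCompact_Icc.prod isCompact_Icc).exists_bound_of_continuousOn
      exact (((continuous_const.mul hFc).mul hvtc)).continuousOn
    have key := intervalIntegral.hasDerivAt_integral_of_dominated_loc_of_deriv_le
      (F := fun t x => (u x t) ^ 2) (F' := fun t x => 2 * u x t * vt x t)
      (x₀ := t₀) (a := (0:ℝ)) (b := 1) (bound := fun _ => C) (μ := volume)
      (Metric.ball_mem_nhds t₀ one_pos)
      (Filter.Eventually.of_forall fun t =>
        ((hFc.comp (continuous_id.prodMk continuous_const)).pow 2).aestronglyMeasurable)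
      (((hFc.comp (continuous_id.prodMk continuous_const)).pow 2).intervalIntegrable 0 1)
      (((continuous_const.mul (hFc.comp (continuous_id.prodMk continuous_const))).mul
        (hvtc.comp (continuous_id.prodMk continuous_const))).aestronglyMeasurable)
      ?_ (intervalIntegrable_const) ?_
    · exact key.2
    · refine Filter.Eventually.of_forall fun x hx t ht => ?_
      apply hC (x, t)
      constructor
      · have : Set.uIoc (0:ℝ) 1 = Set.Ioc 0 1 := Set.uIoc_of_le zero_le_one
        rw [this] at hx
        exact ⟨hx.1.le, hx.2⟩
      · simp only [Metric.mem_ball, Real.dist_eq] at ht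
        have := abs_lt.mp ht
        exact ⟨by linarith [this.1], by linarith [this.2]⟩
    · refine Filter.Eventually.of_forall fun x _ t _ => ?_
      have h := (hut x t).fun_pow 2
      simpa [mul_comm, mul_assoc, mul_left_comm] using h
  -- derivative of G
  have hvx0c : Continuous (fun s => (vx 0 s) ^ 2) :=
    (hvxc.comp (continuous_const.prodMk continuous_id)).pow 2
  have hG' : ∀ t₀ : ℝ, HasDerivAt G ((vx 0 t₀) ^ 2) t₀ := by
    intro t₀
    exact (intervalIntegral.integral_hasStrictDerivAt_right
      (hvx0c.intervalIntegrable 0 t₀)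
      (hvx0c.stronglyMeasurableAtFilter _ _) hvx0c.continuousAt).hasDerivAt
  -- the value of E' for t ≥ 0
  have hval : ∀ t : ℝ, 0 ≤ t →
      (∫ x in (0:ℝ)..1, 2 * u x t * vt x t) = -((1 - β ^ 2) * (vx 0 t) ^ 2) := by
    intro t ht
    set f : ℝ → ℝ := fun y => u y t with hf
    have hfC : ContDiff ℝ (⊤ : ℕ∞) f := hsmooth.comp (contDiff_id.prodMk contDiff_const)
    have hfC' : ContDiff ℝ ((⊤ : ℕ∞) : WithTop ℕ∞) f := hfC.of_le (by simp)
    have h1 := contDiff_infty_iff_deriv.mp hfC'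
    have h2 := contDiff_infty_iff_deriv.mp h1.2
    have h3 := contDiff_infty_iff_deriv.mp h2.2
    have hiter : iteratedDeriv 3 f = deriv (deriv (deriv f)) := by
      simp [iteratedDeriv_succ, iteratedDeriv_zero]
    set H : ℝ → ℝ := fun x => 2 * f x * deriv (deriv f) x - (deriv f x) ^ 2 with hH
    have hHd : ∀ x : ℝ, HasDerivAt H (2 * f x * deriv (deriv (deriv f)) x) x := by
      intro x
      have d1 : HasDerivAt f (deriv f x) x := (h1.1 x).hasDerivAt
      have d2 : HasDerivAt (deriv f) (deriv (deriv f) x) x := (h2.1 x).hasDerivAt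
      have d3 : HasDerivAt (deriv (deriv f)) (deriv (deriv (deriv f)) x) x := (h3.1 x).hasDerivAt
      have e1 : HasDerivAt (fun y => 2 * f y * deriv (deriv f) y)
          ((2 * deriv f x) * deriv (deriv f) x + (2 * f x) * deriv (deriv (deriv f)) x) x :=
        ((d1.const_mul 2).mul d3)
      have e2 : HasDerivAt (fun y => (deriv f y) ^ 2) (2 * deriv f x * deriv (deriv f) x) x := by
        have h := d2.fun_pow 2
        simpa [mul_comm, mul_assoc, mul_left_comm] using h
      have := e1.fun_sub e2
      exact this.congr_deriv (by ring)
    have hint3 : Continuous (deriv (deriv (deriv f))) := h3.2.continuous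
    have hibp : (∫ x in (0:ℝ)..1, 2 * f x * deriv (deriv (deriv f)) x) = H 1 - H 0 := by
      apply intervalIntegral.integral_eq_sub_of_hasDerivAt (fun x _ => hHd x)
      exact ((continuous_const.mul hfC.continuous).mul hint3).intervalIntegrable 0 1
    have hf1 : f 1 = 0 := hbc1 t ht
    have hf0 : f 0 = 0 := hbc0 t ht
    have hd10 : deriv f 0 = vx 0 t := hderiv_x 0 t
    have hd11 : deriv f 1 = β * vx 0 t := by rw [hbc2 t ht, hderiv_x 0 t]
    have hHval : H 1 - H 0 = (1 - β ^ 2) * (vx 0 t) ^ 2 := by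
      simp only [hH, hf1, hf0, hd10, hd11]
      ring
    calc (∫ x in (0:ℝ)..1, 2 * u x t * vt x t)
        = ∫ x in (0:ℝ)..1, -(2 * f x * deriv (deriv (deriv f)) x) := by
          apply intervalIntegral.integral_congr
          intro x _
          show 2 * u x t * vt x t = -(2 * f x * deriv (deriv (deriv f)) x)
          rw [hpde' x t, hiter]
          ring
      _ = -(H 1 - H 0) := by rw [intervalIntegral.integral_neg, hibp]
      _ = -((1 - β ^ 2) * (vx 0 t) ^ 2) := by rw [hHval]
  -- Φ := E + (1-β²) G is constant on [0,∞)
  set Φ : ℝ → ℝ := fun t => E t + (1 - β ^ 2) * G t with hΦ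
  have hΦdiff : Differentiable ℝ Φ := by
    intro t
    exact ((hE' t).add ((hG' t).const_mul (1 - β ^ 2))).differentiableAt
  have hΦderiv : ∀ t : ℝ, 0 < t → deriv Φ t = 0 := by
    intro t ht
    have h := (hE' t).fun_add ((hG' t).const_mul (1 - β ^ 2))
    have hz : (∫ x in (0:ℝ)..1, 2 * u x t * vt x t) + (1 - β ^ 2) * (vx 0 t) ^ 2 = 0 := by
      rw [hval t ht.le]; ring
    rw [h.deriv, hz]
  have hconst : ∀ t : ℝ, 0 ≤ t → Φ t = Φ 0 := by
    intro t ht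
    have hint : interior (Set.Ici (0:ℝ)) = Set.Ioi 0 := interior_Ici
    have hcont : ContinuousOn Φ (Set.Ici 0) := hΦdiff.continuous.continuousOn
    have hdo : DifferentiableOn ℝ Φ (interior (Set.Ici (0:ℝ))) :=
      hΦdiff.differentiableOn
    have hm : MonotoneOn Φ (Set.Ici (0:ℝ)) := by
      apply monotoneOn_of_deriv_nonneg (convex_Ici 0) hcont hdo
      intro x hx
      rw [hint] at hx
      rw [hΦderiv x hx]
    have ha : AntitoneOn Φ (Set.Ici (0:ℝ)) := by
      apply antitoneOn_of_deriv_nonpos (convex_Ici 0) hcont hdo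
      intro x hx
      rw [hint] at hx
      rw [hΦderiv x hx]
    exact le_antisymm (ha Set.self_mem_Ici ht ht) (hm Set.self_mem_Ici ht ht)
  have hβ2 : 0 < 1 - β ^ 2 := by nlinarith
  intro t ht
  have hkey : E t + (1 - β ^ 2) * G t = E 0 := by
    have := hconst t ht
    simpa [hΦ, hG] using this
  have hEnonneg : 0 ≤ E t := by
    apply intervalIntegral.integral_nonneg zero_le_one
    intro x _; positivity
  have hGnonneg : 0 ≤ G t := by
    apply intervalIntegral.integral_nonneg ht
    intro x _; positivity
  have hGeq : (∫ s in (0:ℝ)..t, (deriv (fun y => u y s) 0) ^ 2) = G t := by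
    apply intervalIntegral.integral_congr
    intro s _
    show deriv (fun y => u y s) 0 ^ 2 = vx 0 s ^ 2
    rw [hderiv_x 0 s]
  constructor
  · show E t ≤ E 0
    nlinarith
  · rw [hGeq]
    nlinarith
end

section
/- Suppose u : [0,1] × [0,∞) → ℝ is a smooth solution of u_t + u_{xxx} = 0 with u(0,t) = u(1,t) = 0 and u_x(1,t) = β u_x(0,t). Then for all t ≥ 0, ∫₀¹ x u(x,t)² dx + 3 ∫₀^t ∫₀¹ u_x(x,s)² dx ds = ∫₀¹ x u(x,0)² dx + β² ∫₀^t u_x(0,s)² ds. -/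
set_option maxHeartbeats 1000000

open MeasureTheory intervalIntegral Metric Set

noncomputable def pd (v : ℝ × ℝ) (u : ℝ → ℝ → ℝ) : ℝ → ℝ → ℝ :=
  fun x t => fderiv ℝ (fun p : ℝ × ℝ => u p.1 p.2) (x, t) v

lemma pd_smooth (v : ℝ × ℝ) {u : ℝ → ℝ → ℝ}
    (hu : ContDiff ℝ (⊤ : ℕ∞) fun p : ℝ × ℝ => u p.1 p.2) :
    ContDiff ℝ (⊤ : ℕ∞) (fun p : ℝ × ℝ => pd v u p.1 p.2) :=
  (hu.fderiv_right (by simp)).clm_apply contDiff_const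

lemma pd_hasDerivAt_x {u : ℝ → ℝ → ℝ}
    (hu : ContDiff ℝ (⊤ : ℕ∞) fun p : ℝ × ℝ => u p.1 p.2) (x t : ℝ) :
    HasDerivAt (fun y => u y t) (pd (1,0) u x t) x := by
  have h1 : HasDerivAt (fun y : ℝ => (y, t)) ((1:ℝ), (0:ℝ)) x :=
    (hasDerivAt_id x).prodMk (hasDerivAt_const x t)
  exact ((hu.differentiable (by simp)) (x, t)).hasFDerivAt.comp_hasDerivAt x h1

lemma pd_hasDerivAt_t {u : ℝ → ℝ → ℝ}
    (hu : ContDiff ℝ (⊤ : ℕ∞) fun p : ℝ × ℝ => u p.1 p.2) (x t : ℝ) :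
    HasDerivAt (fun s => u x s) (pd (0,1) u x t) t := by
  have h1 : HasDerivAt (fun s : ℝ => (x, s)) ((0:ℝ), (1:ℝ)) t :=
    (hasDerivAt_const t x).prodMk (hasDerivAt_id t)
  exact ((hu.differentiable (by simp)) (x, t)).hasFDerivAt.comp_hasDerivAt t h1

theorem stmt_6 (β : ℝ) (u : ℝ → ℝ → ℝ)
    (hsmooth : ContDiff ℝ (⊤ : ℕ∞) (fun p : ℝ × ℝ => u p.1 p.2))
    (hpde : ∀ x t : ℝ, deriv (fun s => u x s) t
        + iteratedDeriv 3 (fun y => u y t) x = 0)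
    (hbc0 : ∀ t : ℝ, 0 ≤ t → u 0 t = 0)
    (hbc1 : ∀ t : ℝ, 0 ≤ t → u 1 t = 0)
    (hbc2 : ∀ t : ℝ, 0 ≤ t →
      deriv (fun y => u y t) 1 = β * deriv (fun y => u y t) 0) :
    ∀ t : ℝ, 0 ≤ t →
      (∫ x in (0:ℝ)..1, x * (u x t) ^ 2)
        + 3 * (∫ s in (0:ℝ)..t, ∫ x in (0:ℝ)..1, (deriv (fun y => u y s) x) ^ 2)
      = (∫ x in (0:ℝ)..1, x * (u x 0) ^ 2)
        + β ^ 2 * ∫ s in (0:ℝ)..t, (deriv (fun y => u y s) 0) ^ 2 := by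
  set u1 : ℝ → ℝ → ℝ := pd (1,0) u with hu1def
  set u2 : ℝ → ℝ → ℝ := pd (1,0) u1 with hu2def
  set u3 : ℝ → ℝ → ℝ := pd (1,0) u2 with hu3def
  set ut : ℝ → ℝ → ℝ := pd (0,1) u with hutdef
  have hsu1 : ContDiff ℝ (⊤ : ℕ∞) (fun p : ℝ × ℝ => u1 p.1 p.2) := pd_smooth _ hsmooth
  have hsu2 : ContDiff ℝ (⊤ : ℕ∞) (fun p : ℝ × ℝ => u2 p.1 p.2) := pd_smooth _ hsu1
  have hsu3 : ContDiff ℝ (⊤ : ℕ∞) (fun p : ℝ × ℝ => u3 p.1 p.2) := pd_smooth _ hsu2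
  have hsut : ContDiff ℝ (⊤ : ℕ∞) (fun p : ℝ × ℝ => ut p.1 p.2) := pd_smooth _ hsmooth
  -- continuity of sections
  have csec : ∀ (f : ℝ → ℝ → ℝ), ContDiff ℝ (⊤ : ℕ∞) (fun p : ℝ × ℝ => f p.1 p.2) →
      Continuous (fun p : ℝ × ℝ => f p.1 p.2) := fun f hf => hf.continuous
  have cU := csec u hsmooth
  have cu1 := csec u1 hsu1
  have cu2 := csec u2 hsu2
  have cu3 := csec u3 hsu3
  have cut := csec ut hsut
  -- derivative facts
  have hdx : ∀ x t : ℝ, HasDerivAt (fun y => u y t) (u1 x t) x := pd_hasDerivAt_x hsmooth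
  have hdx1 : ∀ x t : ℝ, HasDerivAt (fun y => u1 y t) (u2 x t) x := pd_hasDerivAt_x hsu1
  have hdx2 : ∀ x t : ℝ, HasDerivAt (fun y => u2 y t) (u3 x t) x := pd_hasDerivAt_x hsu2
  have hdt : ∀ x t : ℝ, HasDerivAt (fun s => u x s) (ut x t) t := pd_hasDerivAt_t hsmooth
  have hderiv1 : ∀ t x : ℝ, deriv (fun y => u y t) x = u1 x t := fun t x => (hdx x t).deriv
  -- PDE in terms of ut, u3
  have hpde' : ∀ x t : ℝ, ut x t = -u3 x t := by
    intro x t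
    have e1 : deriv (fun y => u y t) = fun y => u1 y t := funext fun y => (hdx y t).deriv
    have e2 : deriv (fun y => u1 y t) = fun y => u2 y t := funext fun y => (hdx1 y t).deriv
    have e3 : deriv (fun y => u2 y t) = fun y => u3 y t := funext fun y => (hdx2 y t).deriv
    have h3 : iteratedDeriv 3 (fun y => u y t) x = u3 x t := by
      rw [show (3:ℕ) = 2 + 1 from rfl, iteratedDeriv_succ,
        show (2:ℕ) = 1 + 1 from rfl, iteratedDeriv_succ, iteratedDeriv_one, e1, e2, e3]
    have := hpde x t
    rw [h3, (hdt x t).deriv] at this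
    linarith
  -- Step A : spatial integration by parts
  have stepA : ∀ s : ℝ, 0 ≤ s →
      (∫ x in (0:ℝ)..1, 2 * x * u x s * u3 x s)
        = 3 * (∫ x in (0:ℝ)..1, (u1 x s) ^ 2) - β ^ 2 * (u1 0 s) ^ 2 := by
    intro s hs
    set Φ : ℝ → ℝ := fun y => 2 * y * u y s * u2 y s - 2 * u y s * u1 y s - y * (u1 y s) ^ 2
      with hΦdef
    have hΦ : ∀ y : ℝ, HasDerivAt Φ (2 * y * u y s * u3 y s - 3 * (u1 y s) ^ 2) y := by
      intro y
      have H : HasDerivAt Φ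
          (((2 * 1 * u y s + 2 * y * u1 y s) * u2 y s + 2 * y * u y s * u3 y s)
            - ((2 * u1 y s) * u1 y s + 2 * u y s * u2 y s)
            - (1 * (u1 y s) ^ 2 + y * ((2:ℕ) * (u1 y s) ^ 1 * u2 y s))) y := by
        exact ((((((hasDerivAt_id y).const_mul 2).mul (hdx y s)).mul (hdx2 y s)).sub
          (((hdx y s).const_mul 2).mul (hdx1 y s))).sub
          ((hasDerivAt_id y).mul ((hdx1 y s).pow 2)))
      convert H using 1
      push_cast
      ring
    have hcont : Continuous (fun x : ℝ => 2 * x * u x s * u3 x s - 3 * (u1 x s) ^ 2) := by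
      have c1 : Continuous (fun x : ℝ => u x s) := cU.comp (continuous_id.prodMk continuous_const)
      have c2 : Continuous (fun x : ℝ => u1 x s) := cu1.comp (continuous_id.prodMk continuous_const)
      have c3 : Continuous (fun x : ℝ => u3 x s) := cu3.comp (continuous_id.prodMk continuous_const)
      exact (((continuous_const.mul continuous_id).mul c1).mul c3).sub
        (continuous_const.mul (c2.pow 2))
    have key := intervalIntegral.integral_eq_sub_of_hasDerivAt
      (f := Φ) (a := (0:ℝ)) (b := 1) (fun y _ => hΦ y) (hcont.intervalIntegrable 0 1)
    have hb2 : u1 1 s = β * u1 0 s := by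
      have := hbc2 s hs; rwa [hderiv1, hderiv1] at this
    have hΦval : Φ 1 - Φ 0 = -(β ^ 2 * (u1 0 s) ^ 2) := by
      simp only [hΦdef, hbc0 s hs, hbc1 s hs, hb2]
      ring
    rw [hΦval] at key
    have i1 : IntervalIntegrable (fun x : ℝ => 2 * x * u x s * u3 x s) volume 0 1 := by
      have c1 : Continuous (fun x : ℝ => u x s) := cU.comp (continuous_id.prodMk continuous_const)
      have c3 : Continuous (fun x : ℝ => u3 x s) := cu3.comp (continuous_id.prodMk continuous_const)
      exact (((continuous_const.mul continuous_id).mul c1).mul c3).intervalIntegrable 0 1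
    have i2 : IntervalIntegrable (fun x : ℝ => 3 * (u1 x s) ^ 2) volume 0 1 := by
      have c2 : Continuous (fun x : ℝ => u1 x s) := cu1.comp (continuous_id.prodMk continuous_const)
      exact (continuous_const.mul (c2.pow 2)).intervalIntegrable 0 1
    rw [intervalIntegral.integral_sub i1 i2, intervalIntegral.integral_const_mul] at key
    linarith
  -- Step B : time derivative of the energy
  have stepB : ∀ t : ℝ, 0 ≤ t →
      HasDerivAt (fun τ => ∫ x in (0:ℝ)..1, x * (u x τ) ^ 2)
        (β ^ 2 * (u1 0 t) ^ 2 - 3 * (∫ x in (0:ℝ)..1, (u1 x t) ^ 2)) t := by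
    intro t₀ ht₀
    set F' : ℝ → ℝ → ℝ := fun τ x => x * (2 * u x τ * ut x τ) with hF'def
    have cg : Continuous (fun p : ℝ × ℝ => F' p.2 p.1) := by
      have : Continuous (fun p : ℝ × ℝ => u p.1 p.2) := cU
      have : Continuous (fun p : ℝ × ℝ => ut p.1 p.2) := cut
      simp only [hF'def]
      exact continuous_fst.mul ((continuous_const.mul (cU.comp (continuous_fst.prodMk
        continuous_snd))).mul (cut.comp (continuous_fst.prodMk continuous_snd)))
    obtain ⟨C, hC⟩ := (isCompact_Icc.prod (isCompact_Icc (a := t₀ - 1) (b := t₀ + 1))).exists_bound_of_continuousOn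
      cg.continuousOn
    have main := (intervalIntegral.hasDerivAt_integral_of_dominated_loc_of_deriv_le
      (F := fun τ x => x * (u x τ) ^ 2) (F' := F') (x₀ := t₀) (a := (0:ℝ)) (b := 1)
      (bound := fun _ => C) (s := Metric.ball t₀ 1) (μ := volume) (Metric.ball_mem_nhds t₀ one_pos)
      (Filter.Eventually.of_forall fun τ => (Continuous.aestronglyMeasurable (by
        have c1 : Continuous (fun x : ℝ => u x τ) := cU.comp (continuous_id.prodMk continuous_const)
        exact continuous_id.mul (c1.pow 2))))
      (by
        have c1 : Continuous (fun x : ℝ => u x t₀) := cU.comp (continuous_id.prodMk continuous_const)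
        show IntervalIntegrable (fun x : ℝ => x * (u x t₀) ^ 2) volume 0 1
        exact (continuous_id.mul (c1.pow 2)).intervalIntegrable 0 1)
      ((cg.comp (continuous_id.prodMk continuous_const)).aestronglyMeasurable)
      (ae_of_all _ (by
        intro x hx τ hτ
        have hx' : x ∈ Icc (0:ℝ) 1 := by
          rw [Set.uIoc_of_le (by norm_num : (0:ℝ) ≤ 1)] at hx
          exact ⟨le_of_lt hx.1, hx.2⟩
        have hτ' : τ ∈ Icc (t₀ - 1) (t₀ + 1) := by
          rw [Real.ball_eq_Ioo] at hτ
          exact ⟨le_of_lt hτ.1, le_of_lt hτ.2⟩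
        exact hC (x, τ) ⟨hx', hτ'⟩))
      (intervalIntegrable_const)
      (ae_of_all _ (by
        intro x hx τ hτ
        have := ((hdt x τ).pow 2).const_mul x
        convert this using 1
        · rfl
        · rfl
        simp only [hF'def]
        push_cast
        ring))).2
    have hval : (∫ x in (0:ℝ)..1, F' t₀ x)
        = β ^ 2 * (u1 0 t₀) ^ 2 - 3 * (∫ x in (0:ℝ)..1, (u1 x t₀) ^ 2) := by
      have e : ∀ x ∈ Set.uIcc (0:ℝ) 1, F' t₀ x = -(2 * x * u x t₀ * u3 x t₀) := by
        intro x _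
        simp only [hF'def, hpde' x t₀]
        ring
      rw [intervalIntegral.integral_congr e, intervalIntegral.integral_neg, stepA t₀ ht₀]
      ring
    rwa [hval] at main
  -- continuity of the time integrands
  have cgfun : Continuous (fun s : ℝ => ∫ x in (0:ℝ)..1, (u1 x s) ^ 2) := by
    apply intervalIntegral.continuous_parametric_intervalIntegral_of_continuous'
      (f := fun s x => (u1 x s) ^ 2) (μ := volume)
    exact (cu1.comp (continuous_snd.prodMk continuous_fst)).pow 2
  have ckfun : Continuous (fun s : ℝ => (u1 0 s) ^ 2) :=
    ((cu1.comp (continuous_const.prodMk continuous_id)).pow 2)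
  have hG : ∀ t : ℝ, HasDerivAt (fun τ => ∫ s in (0:ℝ)..τ, ∫ x in (0:ℝ)..1, (u1 x s) ^ 2)
      (∫ x in (0:ℝ)..1, (u1 x t) ^ 2) t := fun t =>
    intervalIntegral.integral_hasDerivAt_right (cgfun.intervalIntegrable 0 t)
      (cgfun.stronglyMeasurableAtFilter volume (nhds t)) cgfun.continuousAt
  have hK : ∀ t : ℝ, HasDerivAt (fun τ => ∫ s in (0:ℝ)..τ, (u1 0 s) ^ 2) ((u1 0 t) ^ 2) t :=
    fun t => intervalIntegral.integral_hasDerivAt_right (ckfun.intervalIntegrable 0 t)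
      (ckfun.stronglyMeasurableAtFilter volume (nhds t)) ckfun.continuousAt
  -- the combined function is constant
  intro t ht
  set Ψ : ℝ → ℝ := fun τ => (∫ x in (0:ℝ)..1, x * (u x τ) ^ 2)
      + 3 * (∫ s in (0:ℝ)..τ, ∫ x in (0:ℝ)..1, (u1 x s) ^ 2)
      - β ^ 2 * (∫ s in (0:ℝ)..τ, (u1 0 s) ^ 2) with hΨdef
  have hΨ : ∀ τ : ℝ, 0 ≤ τ → HasDerivAt Ψ 0 τ := by
    intro τ hτ
    have H := ((stepB τ hτ).add ((hG τ).const_mul 3)).sub ((hK τ).const_mul (β ^ 2))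
    exact H.congr_deriv (by ring)
  have hconst : Ψ t = Ψ 0 := by
    have := intervalIntegral.integral_eq_sub_of_hasDerivAt (f := Ψ) (f' := fun _ => (0:ℝ))
      (a := 0) (b := t) (fun s hs => hΨ s (by
        rw [Set.uIcc_of_le ht] at hs
        exact hs.1)) (intervalIntegrable_const)
    simp only [intervalIntegral.integral_zero] at this
    linarith
  simp only [hΨdef, intervalIntegral.integral_same, mul_zero, add_zero, sub_zero] at hconst
  simp only [hderiv1]
  linarith
end
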